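/- Let k ≥ 3 and 2k-1 ≤ n ≤ 3k-3. Then the word P_n^(k) = W_{n-2k+1}^(k) W_{n-2k+1}^(k) V_n^(k) equals the fractional power (W_{n-2k+1}^(k))^r with exponent r = 3 - 1/2^{n-2k+1}; in particular, P_n^(k) is the prefix of length r·|W_{n-2k+1}^(k)| of the infinite periodic word (W_{n-2k+1}^(k))^ω. -/

import Mathlib

def kbon (k : ℕ) (n : ℕ) : ℕ :=
  if _h1 : n < k - 1 then 0
  else if _h2 : n = k - 1 then 1
  else ∑ i ∈ Finset.range k, kbon k (n - i - 1)
termination_by n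
decreasing_by omega

/-- The k-bonacci morphism on words over ℕ. -/
def phiW (k : ℕ) (w : List ℕ) : List ℕ :=
  w.flatMap (fun a => if a % k = k - 1 then [a + 1] else [k * (a / k), a + 1])

/-- The finite k-bonacci word over the infinite alphabet ℕ. -/
def W (k n : ℕ) : List ℕ := (phiW k)^[n] [0]

/-! Below the first letter `k - 1` the morphism acts as `a ↦ 0 (a + 1)`, and
applying it to `V_m = W_{m-1} ⋯ W_0` shifts every index, so `φ(V_m) · 0 = V_{m+1}`. Hence for
`m < k` one gets `W_m = V_m · m` by induction: `V_m` is `W_m` minus its last letter, so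
`W_m W_m V_m` is `W_m W_m W_m` minus its last letter, of length `3 · 2^m - 1`. -/

/-- `V k m = W_{m-1} ⋯ W_1 W_0`; this is the paper's `V_n^(k)` for `m = n - 2k + 1`. -/
def V (k m : ℕ) : List ℕ := ((List.range m).reverse.map (W k)).flatten

lemma phiW_append (k : ℕ) (u v : List ℕ) : phiW k (u ++ v) = phiW k u ++ phiW k v :=
  List.flatMap_append

lemma phiW_singleton_of_lt {k a : ℕ} (h : a + 1 < k) : phiW k [a] = [0, a + 1] := by
  have hmod : a % k ≠ k - 1 := by rw [Nat.mod_eq_of_lt (by omega)]; omega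
  simp [phiW, hmod, Nat.div_eq_of_lt (show a < k by omega)]

lemma W_succ (k m : ℕ) : W k (m + 1) = phiW k (W k m) :=
  Function.iterate_succ_apply' _ _ _

lemma V_succ (k m : ℕ) : V k (m + 1) = W k m ++ V k m := by
  simp [V, List.range_succ]

lemma phiW_V_append_zero (k m : ℕ) : phiW k (V k m) ++ [0] = V k (m + 1) := by
  induction m with
  | zero => rfl
  | succ m ih => rw [V_succ, phiW_append, List.append_assoc, ih, ← W_succ, ← V_succ]

lemma W_eq_V_append {k m : ℕ} (h : m < k) : W k m = V k m ++ [m] := by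
  induction m with
  | zero => rfl
  | succ m ih =>
    calc W k (m + 1) = phiW k (V k m) ++ [0] ++ [m + 1] := by
          rw [W_succ, ih (by omega), phiW_append, phiW_singleton_of_lt h, List.append_assoc]; rfl
      _ = V k (m + 1) ++ [m + 1] := by rw [phiW_V_append_zero]

lemma V_length_add_one {k m : ℕ} (h : m < k) : (V k m).length + 1 = 2 ^ m := by
  induction m with
  | zero => rfl
  | succ m ih =>
    have hW : (W k m).length = (V k m).length + 1 := by
      simp [W_eq_V_append (show m < k by omega)]
    rw [V_succ, List.length_append, hW, pow_succ, ← ih (by omega)]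
    ring

lemma W_length {k m : ℕ} (h : m < k) : (W k m).length = 2 ^ m := by
  rw [← V_length_add_one h, W_eq_V_append h, List.length_append, List.length_singleton]

theorem P_is_fractional_power_general (k n : ℕ) (hk : 3 ≤ k) (h2 : n ≤ 3 * k - 3) :
    (W k (n + 1 - 2 * k) ++ W k (n + 1 - 2 * k) ++
        (((List.range (n + 1 - 2 * k)).reverse).map (W k)).flatten) <+:
      (W k (n + 1 - 2 * k) ++ W k (n + 1 - 2 * k) ++ W k (n + 1 - 2 * k)) ∧
    ((W k (n + 1 - 2 * k) ++ W k (n + 1 - 2 * k) ++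
        (((List.range (n + 1 - 2 * k)).reverse).map (W k)).flatten).length : ℚ) =
      (3 - 1 / 2 ^ (n + 1 - 2 * k)) * (W k (n + 1 - 2 * k)).length := by
  set m := n + 1 - 2 * k
  have hm : m < k := by omega
  change W k m ++ W k m ++ V k m <+: _ ∧ ((W k m ++ W k m ++ V k m).length : ℚ) = _
  refine ⟨⟨[m], by rw [List.append_assoc _ (V k m), ← W_eq_V_append hm]⟩, ?_⟩
  have hV : ((V k m).length : ℚ) = 2 ^ m - 1 := by
    rw [eq_sub_iff_add_eq]; exact_mod_cast V_length_add_one hm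
  rw [List.length_append, List.length_append, W_length hm]
  push_cast [hV]
  field_simp
  ring

theorem P_is_fractional_power (k n : ℕ) (hk : 3 ≤ k) (h1 : 2 * k - 1 ≤ n) (h2 : n ≤ 3 * k - 3) :
    (W k (n + 1 - 2 * k) ++ W k (n + 1 - 2 * k) ++
        (((List.range (n + 1 - 2 * k)).reverse).map (W k)).flatten) <+:
      (W k (n + 1 - 2 * k) ++ W k (n + 1 - 2 * k) ++ W k (n + 1 - 2 * k)) ∧
    ((W k (n + 1 - 2 * k) ++ W k (n + 1 - 2 * k) ++
        (((List.range (n + 1 - 2 * k)).reverse).map (W k)).flatten).length : ℚ) =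
      (3 - 1 / 2 ^ (n + 1 - 2 * k)) * (W k (n + 1 - 2 * k)).length :=
  P_is_fractional_power_general k n hk h2
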